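/- Consider the univariate decision problem: Y ∼ N(θ, σ²) with θ ∈ [−τ, τ], τ > 0. For the threshold decision rule δ₀(Y) = 1{Y ≥ 0}, the maximum regret sup_{θ ∈ [−τ,τ]} R(δ₀, θ), where R(δ, θ) = θ·Φ(−θ/σ) for θ ≥ 0 and R(δ, θ) = (−θ)·Φ(θ/σ) for θ < 0, equals τ·Φ(−τ/σ) if τ ≤ a*σ, and a*σ·Φ(−a*) if τ > a*σ. -/

import Mathlib

/-- The density of the standard normal distribution. -/
noncomputable def stdGaussianPDF (x : ℝ) : ℝ :=
  (Real.sqrt (2 * Real.pi))⁻¹ * Real.exp (-(x ^ 2) / 2)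

/-- The cumulative distribution function of the standard normal distribution. -/
noncomputable def stdGaussianCDF (x : ℝ) : ℝ :=
  ∫ t in Set.Iic x, stdGaussianPDF t

/-!
Writing `g a = a * Φ(-a)`, the regret of the threshold rule at `θ` is `σ * g (|θ| / σ)`.
Since `g'' a = (a ^ 2 - 2) * φ a`, `g` is concave on `[0, 1]`, and the Mills ratio bound
`Φ(-a) ≤ φ a / a` gives `g' a ≤ φ a * (1 - a ^ 2) / a < 0` for `a > 1`. Hence the maximizer `a*`
lies in `[0, 1]` and `g` is monotone on `[0, a*]`, so the supremum over `|θ| ≤ τ` is attained at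
`|θ| = min τ (a* σ)`.
-/

open MeasureTheory ProbabilityTheory Real Set

lemma ConcaveOn.monotoneOn_of_isMaxOn {𝕜 β : Type*} [Field 𝕜] [LinearOrder 𝕜]
    [IsStrictOrderedRing 𝕜] [AddCommGroup β] [LinearOrder β] [IsOrderedAddMonoid β]
    [Module 𝕜 β] [IsStrictOrderedModule 𝕜 β] {s : Set 𝕜} {f : 𝕜 → β} {a : 𝕜}
    (hf : ConcaveOn 𝕜 s f) (ha : a ∈ s) (hmax : IsMaxOn f s a) :
    MonotoneOn f (s ∩ Iic a) := by
  intro x hx y hy hxy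
  have := hf.min_le_of_mem_Icc hx.1 ha ⟨hxy, hy.2⟩
  rwa [min_eq_left (hmax hx.1)] at this

lemma stdGaussianPDF_pos (x : ℝ) : 0 < stdGaussianPDF x := by
  unfold stdGaussianPDF; positivity

lemma stdGaussianPDF_neg (x : ℝ) : stdGaussianPDF (-x) = stdGaussianPDF x := by
  rw [stdGaussianPDF, stdGaussianPDF, neg_sq]

lemma continuous_stdGaussianPDF : Continuous stdGaussianPDF := by
  unfold stdGaussianPDF; fun_prop

lemma stdGaussianPDF_eq_gaussianPDFReal : stdGaussianPDF = gaussianPDFReal 0 1 := by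
  ext x; simp [stdGaussianPDF, gaussianPDFReal]

lemma integrable_stdGaussianPDF : Integrable stdGaussianPDF :=
  stdGaussianPDF_eq_gaussianPDFReal ▸ integrable_gaussianPDFReal 0 1

lemma integrable_neg_mul_stdGaussianPDF : Integrable fun t => -t * stdGaussianPDF t := by
  refine ((integrable_mul_exp_neg_mul_sq (b := 2⁻¹) (by norm_num)).const_mul
    (-(√(2 * π))⁻¹)).congr (.of_forall fun x => ?_)
  simp only [stdGaussianPDF]; ring_nf

lemma hasDerivAt_stdGaussianPDF (x : ℝ) :
    HasDerivAt stdGaussianPDF (-x * stdGaussianPDF x) x := by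
  refine ((((hasDerivAt_pow 2 x).neg.div_const 2).exp).const_mul (√(2 * π))⁻¹).congr_deriv ?_
  simp only [stdGaussianPDF, Pi.neg_apply]; push_cast; ring

lemma hasDerivAt_stdGaussianCDF (x : ℝ) : HasDerivAt stdGaussianCDF (stdGaussianPDF x) x := by
  have hsplit : ∀ y, stdGaussianCDF y = stdGaussianCDF 0 + ∫ t in (0 : ℝ)..y, stdGaussianPDF t :=
    fun y => by
      rw [← intervalIntegral.integral_Iic_sub_Iic integrable_stdGaussianPDF.integrableOn
        integrable_stdGaussianPDF.integrableOn]
      simp [stdGaussianCDF]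
  have := (intervalIntegral.integral_hasDerivAt_right
    (integrable_stdGaussianPDF.intervalIntegrable (a := 0) (b := x))
    (continuous_stdGaussianPDF.stronglyMeasurableAtFilter _ _)
    continuous_stdGaussianPDF.continuousAt).const_add (stdGaussianCDF 0)
  exact this.congr_of_eventuallyEq (.of_forall hsplit)

lemma integral_Iic_neg_mul_stdGaussianPDF (c : ℝ) :
    ∫ t in Iic c, -t * stdGaussianPDF t = stdGaussianPDF c := by
  have hderiv : ∀ x ∈ Iic c, HasDerivAt stdGaussianPDF (-x * stdGaussianPDF x) x :=
    fun x _ => hasDerivAt_stdGaussianPDF x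
  have hint : IntegrableOn (fun t => -t * stdGaussianPDF t) (Iic c) :=
    integrable_neg_mul_stdGaussianPDF.integrableOn
  rw [integral_Iic_of_hasDerivAt_of_tendsto' hderiv hint
    (tendsto_zero_of_hasDerivAt_of_integrableOn_Iic hderiv hint
      integrable_stdGaussianPDF.integrableOn), sub_zero]

lemma stdGaussianCDF_neg_le_div {a : ℝ} (ha : 0 < a) :
    stdGaussianCDF (-a) ≤ stdGaussianPDF a / a := by
  calc stdGaussianCDF (-a) ≤ ∫ t in Iic (-a), -t * stdGaussianPDF t / a := by
        refine setIntegral_mono_on integrable_stdGaussianPDF.integrableOn ?_ measurableSet_Iic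
          fun t ht => ?_
        · exact (integrable_neg_mul_stdGaussianPDF.div_const a).integrableOn
        · rw [le_div_iff₀ ha]
          nlinarith [stdGaussianPDF_pos t, mem_Iic.mp ht]
    _ = stdGaussianPDF a / a := by
        rw [integral_div, integral_Iic_neg_mul_stdGaussianPDF, stdGaussianPDF_neg]

lemma hasDerivAt_mul_stdGaussianCDF_neg (a : ℝ) :
    HasDerivAt (fun a => a * stdGaussianCDF (-a))
      (stdGaussianCDF (-a) - a * stdGaussianPDF a) a := by
  refine ((hasDerivAt_id' a).mul
    ((hasDerivAt_stdGaussianCDF (-a)).comp a (hasDerivAt_neg a))).congr_deriv ?_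
  rw [stdGaussianPDF_neg, Function.comp_apply]; ring

lemma hasDerivAt_stdGaussianCDF_neg_sub_mul_stdGaussianPDF (a : ℝ) :
    HasDerivAt (fun a => stdGaussianCDF (-a) - a * stdGaussianPDF a)
      ((a ^ 2 - 2) * stdGaussianPDF a) a := by
  refine (((hasDerivAt_stdGaussianCDF (-a)).comp a (hasDerivAt_neg a)).sub
    ((hasDerivAt_id' a).mul (hasDerivAt_stdGaussianPDF a))).congr_deriv ?_
  rw [stdGaussianPDF_neg]; ring

lemma continuous_mul_stdGaussianCDF_neg : Continuous fun a : ℝ => a * stdGaussianCDF (-a) :=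
  continuous_iff_continuousAt.mpr fun a => (hasDerivAt_mul_stdGaussianCDF_neg a).continuousAt

lemma concaveOn_mul_stdGaussianCDF_neg :
    ConcaveOn ℝ (Icc 0 1) fun a : ℝ => a * stdGaussianCDF (-a) := by
  refine concaveOn_of_hasDerivWithinAt2_nonpos (convex_Icc 0 1)
    continuous_mul_stdGaussianCDF_neg.continuousOn
    (fun x _ => (hasDerivAt_mul_stdGaussianCDF_neg x).hasDerivWithinAt)
    (fun x _ => (hasDerivAt_stdGaussianCDF_neg_sub_mul_stdGaussianPDF x).hasDerivWithinAt)
    fun x hx => ?_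
  rw [interior_Icc] at hx
  exact mul_nonpos_of_nonpos_of_nonneg (by nlinarith [hx.1, hx.2]) (stdGaussianPDF_pos x).le

lemma strictAntiOn_mul_stdGaussianCDF_neg :
    StrictAntiOn (fun a : ℝ => a * stdGaussianCDF (-a)) (Ici 1) := by
  refine strictAntiOn_of_hasDerivWithinAt_neg (convex_Ici 1)
    continuous_mul_stdGaussianCDF_neg.continuousOn
    (fun x _ => (hasDerivAt_mul_stdGaussianCDF_neg x).hasDerivWithinAt) fun x hx => ?_
  rw [interior_Ici, mem_Ioi] at hx
  have hx0 : 0 < x := by linarith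
  have hmills := stdGaussianCDF_neg_le_div hx0
  have hφ := stdGaussianPDF_pos x
  have : stdGaussianPDF x / x < x * stdGaussianPDF x := by
    rw [div_lt_iff₀ hx0]; nlinarith [mul_lt_mul_of_pos_right (one_lt_mul hx.le hx) hφ]
  linarith

lemma le_one_of_isMaxOn_mul_stdGaussianCDF_neg {a : ℝ}
    (hmax : IsMaxOn (fun a : ℝ => a * stdGaussianCDF (-a)) (Ici 0) a) : a ≤ 1 := by
  by_contra! h
  exact (strictAntiOn_mul_stdGaussianCDF_neg self_mem_Ici (mem_Ici.mpr h.le) h).not_ge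
    (hmax (mem_Ici.mpr zero_le_one))

lemma monotoneOn_mul_stdGaussianCDF_neg_of_isMaxOn {a : ℝ} (ha : 0 ≤ a)
    (hmax : IsMaxOn (fun a : ℝ => a * stdGaussianCDF (-a)) (Ici 0) a) :
    MonotoneOn (fun a : ℝ => a * stdGaussianCDF (-a)) (Icc 0 a) := by
  have ha1 := le_one_of_isMaxOn_mul_stdGaussianCDF_neg hmax
  exact (concaveOn_mul_stdGaussianCDF_neg.monotoneOn_of_isMaxOn ⟨ha, ha1⟩
    (hmax.on_subset Icc_subset_Ici_self)).mono fun x hx => ⟨⟨hx.1, hx.2.trans ha1⟩, hx.2⟩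

lemma threshold_regret_eq {σ : ℝ} (hσ : 0 < σ) (θ : ℝ) :
    (if 0 ≤ θ then θ * stdGaussianCDF (-(θ / σ)) else -θ * stdGaussianCDF (θ / σ)) =
      σ * (|θ| / σ * stdGaussianCDF (-(|θ| / σ))) := by
  split_ifs with h
  · rw [abs_of_nonneg h]; field_simp
  · rw [abs_of_neg (not_le.mp h), neg_div, neg_neg]; field_simp

theorem maxRegret_threshold_univariate_general (σ τ astar : ℝ) (hσ : 0 < σ) (hτ : 0 < τ)
    (hastar0 : 0 ≤ astar)
    (hmax : ∀ a, 0 ≤ a → a * stdGaussianCDF (-a) ≤ astar * stdGaussianCDF (-astar)) :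
    sSup ((fun θ : ℝ => if 0 ≤ θ then θ * stdGaussianCDF (-(θ / σ))
        else -θ * stdGaussianCDF (θ / σ)) '' Set.Icc (-τ) τ) =
      if τ ≤ astar * σ then τ * stdGaussianCDF (-(τ / σ))
      else astar * σ * stdGaussianCDF (-astar) := by
  have hmono := monotoneOn_mul_stdGaussianCDF_neg_of_isMaxOn hastar0 hmax
  have hθσ : ∀ θ, 0 ≤ |θ| / σ := fun θ => div_nonneg (abs_nonneg θ) hσ.le
  simp_rw [threshold_regret_eq hσ]
  split_ifs with hc
  · have hτσ : τ / σ ≤ astar := (div_le_iff₀ hσ).mpr hc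
    refine IsGreatest.csSup_eq ⟨⟨τ, ⟨by linarith, le_rfl⟩, ?_⟩, ?_⟩
    · dsimp only; rw [abs_of_pos hτ]; field_simp
    rintro _ ⟨θ, hθ, rfl⟩
    have hθτ : |θ| / σ ≤ τ / σ := by gcongr; exact abs_le.mpr hθ
    calc σ * (|θ| / σ * stdGaussianCDF (-(|θ| / σ)))
        ≤ σ * (τ / σ * stdGaussianCDF (-(τ / σ))) :=
          mul_le_mul_of_nonneg_left
            (hmono ⟨hθσ θ, hθτ.trans hτσ⟩ ⟨(hθσ θ).trans hθτ, hτσ⟩ hθτ) hσ.le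
      _ = τ * stdGaussianCDF (-(τ / σ)) := by field_simp
  · have hastarσ : 0 ≤ astar * σ := mul_nonneg hastar0 hσ.le
    refine IsGreatest.csSup_eq ⟨⟨astar * σ, ⟨by linarith, by linarith⟩, ?_⟩, ?_⟩
    · dsimp only; rw [abs_of_nonneg hastarσ, mul_div_cancel_right₀ _ hσ.ne']; ring
    rintro _ ⟨θ, -, rfl⟩
    calc σ * (|θ| / σ * stdGaussianCDF (-(|θ| / σ)))
        ≤ σ * (astar * stdGaussianCDF (-astar)) :=
          mul_le_mul_of_nonneg_left (hmax _ (hθσ θ)) hσ.le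
      _ = astar * σ * stdGaussianCDF (-astar) := by ring

/-- In the univariate problem `Y ∼ N(θ, σ²)`, `θ ∈ [−τ, τ]`, `τ > 0`, the maximum regret
of the threshold rule `δ₀(Y) = 1{Y ≥ 0}`, whose regret is `θ·Φ(−θ/σ)` for `θ ≥ 0` and
`(−θ)·Φ(θ/σ)` for `θ < 0`, equals `τ·Φ(−τ/σ)` if `τ ≤ a*σ` and `a*σ·Φ(−a*)` if
`τ > a*σ`, where `a*` is the unique maximizer of `a·Φ(−a)` over `[0, ∞)`. -/
theorem maxRegret_threshold_univariate (σ τ astar : ℝ) (hσ : 0 < σ) (hτ : 0 < τ)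
    (hastar0 : 0 ≤ astar)
    (hmax : ∀ a, 0 ≤ a → a * stdGaussianCDF (-a) ≤ astar * stdGaussianCDF (-astar))
    (huniq : ∀ a, 0 ≤ a →
      (∀ b, 0 ≤ b → b * stdGaussianCDF (-b) ≤ a * stdGaussianCDF (-a)) → a = astar) :
    sSup ((fun θ : ℝ => if 0 ≤ θ then θ * stdGaussianCDF (-(θ / σ))
        else -θ * stdGaussianCDF (θ / σ)) '' Set.Icc (-τ) τ) =
      if τ ≤ astar * σ then τ * stdGaussianCDF (-(τ / σ))
      else astar * σ * stdGaussianCDF (-astar) :=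
  maxRegret_threshold_univariate_general σ τ astar hσ hτ hastar0 hmax
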